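/- Let u be the convex envelope of f on Ω̄, x ∈ Ω \ C(f), and p a subgradient of u at x. Then there exist points x₁,…,x_k ∈ C(f) with 2 ≤ k ≤ d+1 such that x ∈ conv(x₁,…,x_k), u is affine on conv(x₁,…,x_k), and p is a subgradient of u at every point of conv(x₁,…,x_k). -/

import Mathlib

/-!
The affine function `ℓ y = u x + ⟪p, y - x⟫` is a convex minorant of `f` on `Ω̄` touching `u`
at `x`. If `x` were outside the convex hull of the compact set `S = {y ∈ Ω̄ | f y ≤ ℓ y}`, a
functional `φ` strictly separating `x` from it (`φ < c` on the hull, `c < φ x`) would give a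
larger convex minorant `ℓ + ε (φ - c)` of `f` exceeding `u` at `x`. By Carathéodory, `x` lies in
the hull of at most `d + 1` points of `S`, at least two since `x ∉ S`; the convex function
`u - ℓ` is `≤ 0` at these points and `≥ 0` on `Ω̄`, so `u = ℓ` on their hull.
-/

open scoped RealInnerProductSpace

open Set Module

theorem exists_fin_sum_smul_eq_of_mem_convexHull {𝕜 E : Type*} [Field 𝕜] [LinearOrder 𝕜]
    [IsStrictOrderedRing 𝕜] [AddCommGroup E] [Module 𝕜 E] [FiniteDimensional 𝕜 E]
    {s : Set E} {x : E} (hx : x ∈ convexHull 𝕜 s) :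
    ∃ k ≤ finrank 𝕜 E + 1, ∃ (w : Fin k → 𝕜) (z : Fin k → E), range z ⊆ s ∧
      (∀ i, 0 < w i) ∧ ∑ i, w i = 1 ∧ ∑ i, w i • z i = x := by
  obtain ⟨ι, _, z, w, hzs, hz, hw0, hw1, hwz⟩ := eq_pos_convex_span_of_mem_convexHull hx
  have hcard : Fintype.card ι ≤ finrank 𝕜 E + 1 :=
    hz.card_le_finrank_succ.trans (Nat.succ_le_succ (Submodule.finrank_le _))
  let e := (Fintype.equivFin ι).symm
  refine ⟨Fintype.card ι, hcard, w ∘ e, z ∘ e, ?_, fun i => hw0 _, ?_, ?_⟩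
  · rwa [range_comp, e.range_eq_univ, image_univ]
  · exact (e.sum_comp w).trans hw1
  · exact (e.sum_comp fun i => w i • z i).trans hwz

theorem two_le_of_mem_convexHull_range {𝕜 E : Type*} [Semiring 𝕜] [PartialOrder 𝕜]
    [IsOrderedRing 𝕜] [AddCommGroup E] [Module 𝕜 E] {k : ℕ} {z : Fin k → E} {x : E}
    (hx : x ∈ convexHull 𝕜 (range z)) (hxz : x ∉ range z) : 2 ≤ k := by
  match k, z with
  | 0, z => simp at hx
  | 1, z =>
    rw [range_unique, convexHull_singleton] at hx
    exact absurd (hx ▸ mem_range_self 0) hxz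
  | k + 2, _ => omega

theorem ConvexOn.eqOn_convexHull_of_le {E : Type*} [AddCommGroup E] [Module ℝ E]
    {K t : Set E} {u ℓ : E → ℝ} (hu : ConvexOn ℝ K u) (hℓ : ConcaveOn ℝ K ℓ) (htK : t ⊆ K)
    (hℓu : ∀ y ∈ K, ℓ y ≤ u y) (ht : ∀ y ∈ t, u y ≤ ℓ y) : EqOn u ℓ (convexHull ℝ t) := by
  intro y hy
  obtain ⟨y₀, hy₀, hle⟩ := (hu.sub hℓ).exists_ge_of_mem_convexHull htK hy
  simp only [Pi.sub_apply] at hle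
  linarith [ht y₀ hy₀, hℓu y (convexHull_min htK hu.1 hy)]

theorem IsCompact.exists_pos_mul_sub_le {X : Type*} [TopologicalSpace X] {K : Set X}
    {g φ : X → ℝ} {c : ℝ} (hK : IsCompact K) (hg : ContinuousOn g K) (hφ : Continuous φ)
    (hg0 : ∀ y ∈ K, 0 ≤ g y) (hpos : ∀ y ∈ K, c ≤ φ y → 0 < g y) :
    ∃ ε > 0, ∀ y ∈ K, ε * (φ y - c) ≤ g y := by
  have hK' : IsCompact (K ∩ φ ⁻¹' Ici c) := hK.inter_right (isClosed_Ici.preimage hφ)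
  obtain ⟨δ, hδ, hδg⟩ := hK'.exists_forall_le' (hg.mono inter_subset_left)
    fun y hy => hpos y hy.1 hy.2
  obtain ⟨B, hB⟩ := hK'.bddAbove_image hφ.continuousOn
  set m := max (B - c) 1
  have hm : 0 < m := lt_max_of_lt_right one_pos
  refine ⟨δ / m, div_pos hδ hm, fun y hy => ?_⟩
  rcases lt_or_ge (φ y) c with hyc | hyc
  · exact (mul_neg_of_pos_of_neg (div_pos hδ hm) (sub_neg.2 hyc)).le.trans (hg0 y hy)
  · have hφB : φ y - c ≤ m :=
      (sub_le_sub_right (hB ⟨y, ⟨hy, hyc⟩, rfl⟩) c).trans (le_max_left _ _)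
    calc δ / m * (φ y - c) ≤ δ / m * m := by gcongr
      _ = δ := div_mul_cancel₀ δ hm.ne'
      _ ≤ g y := hδg y ⟨hy, hyc⟩

section FiniteDimensional

variable {E : Type*} [NormedAddCommGroup E] [NormedSpace ℝ E] [FiniteDimensional ℝ E]

theorem isCompact_convexHull {s : Set E} (hs : IsCompact s) : IsCompact (convexHull ℝ s) := by
  let combination (k : ℕ) (q : (Fin k → ℝ) × (Fin k → E)) : E := ∑ i, q.1 i • q.2 i
  have hhull : convexHull ℝ s = ⋃ k : Fin (finrank ℝ E + 2),
      combination k '' (stdSimplex ℝ (Fin k) ×ˢ univ.pi fun _ => s) := by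
    refine subset_antisymm (fun x hx => ?_) (iUnion_subset fun k => ?_)
    · obtain ⟨k, hk, w, z, hzs, hw0, hw1, rfl⟩ := exists_fin_sum_smul_eq_of_mem_convexHull hx
      exact mem_iUnion.2 ⟨⟨k, Nat.lt_succ_of_le hk⟩, (w, z),
        ⟨⟨fun i => (hw0 i).le, hw1⟩, fun i _ => hzs (mem_range_self i)⟩, rfl⟩
    · rintro _ ⟨⟨w, z⟩, ⟨⟨hw0, hw1⟩, hzs⟩, rfl⟩
      exact (convex_convexHull ℝ s).sum_mem (fun i _ => hw0 i) hw1
        fun i _ => subset_convexHull ℝ s (hzs i (mem_univ i))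
  rw [hhull]
  exact isCompact_iUnion fun k =>
    ((isCompact_stdSimplex ℝ _).prod (isCompact_univ_pi fun _ => hs)).image (by fun_prop)

theorem mem_convexHull_setOf_le_of_forall_convexOn_le {K : Set E} {f ℓ : E → ℝ} {x : E}
    (hK : IsCompact K) (hf : ContinuousOn f K) (hℓ : ConvexOn ℝ K ℓ) (hℓc : ContinuousOn ℓ K)
    (hℓf : ∀ y ∈ K, ℓ y ≤ f y)
    (hmax : ∀ v, ConvexOn ℝ K v → (∀ y ∈ K, v y ≤ f y) → v x ≤ ℓ x) :
    x ∈ convexHull ℝ {y ∈ K | f y ≤ ℓ y} := by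
  by_contra hxS
  have hS : IsCompact {y ∈ K | f y ≤ ℓ y} :=
    hK.of_isClosed_subset (hK.isClosed.isClosed_le hf hℓc) (sep_subset _ _)
  obtain ⟨φ, c, hφS, hφx⟩ := geometric_hahn_banach_closed_point (convex_convexHull ℝ _)
    (isCompact_convexHull hS).isClosed hxS
  obtain ⟨ε, hε, hεf⟩ := hK.exists_pos_mul_sub_le (g := fun y => f y - ℓ y) (hf.sub hℓc)
    φ.continuous (fun y hy => sub_nonneg.2 (hℓf y hy)) fun y hy hyc =>
      sub_pos.2 <| lt_of_not_ge fun hfy => (hφS y (subset_convexHull ℝ _ ⟨hy, hfy⟩)).not_ge hyc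
  have hlift : ConvexOn ℝ K fun y => ℓ y + ε * (φ y - c) :=
    hℓ.add <| (((ε • φ).toLinearMap.convexOn hℓ.1).add_const (-(ε * c))).congr fun y _ => by
      simp only [ContinuousLinearMap.coe_coe, FunLike.coe_smul, Pi.add_apply, Pi.smul_apply,
        smul_eq_mul]
      ring
  linarith [hmax _ hlift fun y hy => by linarith [hεf y hy], mul_pos hε (sub_pos.2 hφx)]

end FiniteDimensional

theorem structure_of_noncontact_set_general
    (d : ℕ) (Ω : Set (EuclideanSpace ℝ (Fin d)))
    (hΩb : Bornology.IsBounded Ω)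
    (f u : EuclideanSpace ℝ (Fin d) → ℝ)
    (hf : ContinuousOn f (closure Ω))
    (hu_cvx : ConvexOn ℝ (closure Ω) u)
    (hu_le : ∀ x ∈ closure Ω, u x ≤ f x)
    (hu_max : ∀ v : EuclideanSpace ℝ (Fin d) → ℝ, ConvexOn ℝ (closure Ω) v →
        (∀ x ∈ closure Ω, v x ≤ f x) → ∀ x ∈ closure Ω, v x ≤ u x)
    (x : EuclideanSpace ℝ (Fin d)) (hx : x ∈ Ω) (hnc : u x < f x)
    (p : EuclideanSpace ℝ (Fin d))
    (hp : ∀ y ∈ closure Ω, u x + ⟪p, y - x⟫ ≤ u y) :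
    ∃ (k : ℕ) (pts : Fin k → EuclideanSpace ℝ (Fin d)),
      2 ≤ k ∧ k ≤ d + 1 ∧
      (∀ i, pts i ∈ closure Ω ∧ u (pts i) = f (pts i)) ∧
      x ∈ convexHull ℝ (Set.range pts) ∧
      (∃ (a : EuclideanSpace ℝ (Fin d)) (b : ℝ),
        ∀ y ∈ convexHull ℝ (Set.range pts), u y = ⟪a, y⟫ + b) ∧
      (∀ y ∈ convexHull ℝ (Set.range pts),
        ∀ z ∈ closure Ω, u y + ⟪p, z - y⟫ ≤ u z) := by
  set b := u x - ⟪p, x⟫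
  have hxK : x ∈ closure Ω := subset_closure hx
  have hℓu : ∀ y ∈ closure Ω, ⟪p, y⟫ + b ≤ u y := fun y hy => by
    linarith [hp y hy, inner_sub_right (𝕜 := ℝ) p y x]
  have hxS : x ∈ convexHull ℝ {y ∈ closure Ω | f y ≤ ⟪p, y⟫ + b} :=
    mem_convexHull_setOf_le_of_forall_convexOn_le hΩb.isCompact_closure hf
      (((innerₛₗ ℝ p).convexOn hu_cvx.1).add_const b) (by fun_prop)
      (fun y hy => (hℓu y hy).trans (hu_le y hy))
      fun v hv hvf => (hu_max v hv hvf x hxK).trans_eq (by ring)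
  obtain ⟨k, hk, w, z, hzS, hw0, hw1, hwz⟩ := exists_fin_sum_smul_eq_of_mem_convexHull hxS
  have hxz : x ∈ convexHull ℝ (range z) := hwz ▸ (convex_convexHull ℝ _).sum_mem
    (fun i _ => (hw0 i).le) hw1 fun i _ => subset_convexHull ℝ _ (mem_range_self i)
  have hz (i : Fin k) : z i ∈ closure Ω ∧ f (z i) ≤ ⟪p, z i⟫ + b := hzS (mem_range_self i)
  have hu_eq : EqOn u (fun y => ⟪p, y⟫ + b) (convexHull ℝ (range z)) :=
    hu_cvx.eqOn_convexHull_of_le (((innerₛₗ ℝ p).concaveOn hu_cvx.1).add_const b)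
      (fun _ hy => (hzS hy).1) hℓu (forall_mem_range.2 fun i => (hu_le _ (hz i).1).trans (hz i).2)
  have hz_contact (i : Fin k) : u (z i) = f (z i) := by
    linarith [hz i, hℓu _ (hz i).1, hu_le _ (hz i).1]
  have hxz_ne : x ∉ range z := by
    rintro ⟨i, rfl⟩
    exact hnc.ne (hz_contact i)
  refine ⟨k, z, two_le_of_mem_convexHull_range hxz hxz_ne, by simpa using hk,
    fun i => ⟨(hz i).1, hz_contact i⟩, hxz, ⟨p, b, hu_eq⟩, fun y hy y' hy' => ?_⟩
  rw [hu_eq hy, inner_sub_right]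
  linarith [hℓu y' hy']

/-- Structure of the non-contact set: if `x ∈ Ω \ C(f)` and `p` is a subgradient of the
convex envelope `u` at `x`, then there are `2 ≤ k ≤ d+1` contact points whose convex hull
contains `x`, on which `u` is affine, and `p` is a subgradient of `u` at every point of
that hull. -/
theorem structure_of_noncontact_set
    (d : ℕ) (Ω : Set (EuclideanSpace ℝ (Fin d)))
    (hΩo : IsOpen Ω) (hΩc : Convex ℝ Ω) (hΩb : Bornology.IsBounded Ω)
    (f u : EuclideanSpace ℝ (Fin d) → ℝ)
    (hf : ContinuousOn f (closure Ω))
    (hu_cvx : ConvexOn ℝ (closure Ω) u)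
    (hu_le : ∀ x ∈ closure Ω, u x ≤ f x)
    (hu_max : ∀ v : EuclideanSpace ℝ (Fin d) → ℝ, ConvexOn ℝ (closure Ω) v →
        (∀ x ∈ closure Ω, v x ≤ f x) → ∀ x ∈ closure Ω, v x ≤ u x)
    (x : EuclideanSpace ℝ (Fin d)) (hx : x ∈ Ω) (hnc : u x < f x)
    (p : EuclideanSpace ℝ (Fin d))
    (hp : ∀ y ∈ closure Ω, u x + ⟪p, y - x⟫ ≤ u y) :
    ∃ (k : ℕ) (pts : Fin k → EuclideanSpace ℝ (Fin d)),
      2 ≤ k ∧ k ≤ d + 1 ∧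
      (∀ i, pts i ∈ closure Ω ∧ u (pts i) = f (pts i)) ∧
      x ∈ convexHull ℝ (Set.range pts) ∧
      (∃ (a : EuclideanSpace ℝ (Fin d)) (b : ℝ),
        ∀ y ∈ convexHull ℝ (Set.range pts), u y = ⟪a, y⟫ + b) ∧
      (∀ y ∈ convexHull ℝ (Set.range pts),
        ∀ z ∈ closure Ω, u y + ⟪p, z - y⟫ ≤ u z) :=
  structure_of_noncontact_set_general d Ω hΩb f u hf hu_cvx hu_le hu_max x hx hnc p hp
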